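/- arXiv:2404.13461 — 10 statements merged into one kernel-verified Lean document; each statement's English description precedes it below -/
import Mathlib

section
/- Let β_H, β_C, ω > 0 and λ_H, λ_C ∈ [0,1], and let p* := N/D with N := 1 − λ_H(1−λ_C) − λ_C(1−λ_H)e^{−β_Cω} and D := 2 − λ_C(1−λ_H) − λ_H − λ_C(1−λ_H)e^{−β_Cω} − λ_H(1−λ_C)e^{−β_Hω} + λ_H·λ_C·e^{−(β_H+β_C)ω}. Assume λ_H·(p*·e^{−β_Hω} + p* − 1) ≠ 0 and λ_H·(e^{−β_Hω} − (1−λ_C) − λ_C e^{−(β_H+β_C)ω}) ≠ 0. Define the efficiency η*(p) := 1 − (2p − 1 − λ_H(p e^{−β_Hω} + p − 1)) / (λ_H(p e^{−β_Hω} + p − 1)). Then η*(p*) = 1 − λ_C·(1 − λ_H e^{−β_Hω} − (1−λ_H)e^{−β_Cω}) / (λ_H·(e^{−β_Hω} − (1−λ_C) − λ_C e^{−(β_H+β_C)ω})). -/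
/-! At the cyclic state `p* = N / D` both the heat `Q_H(p*)` and the quantity `2p* - 1 - Q_H(p*)`
entering the efficiency are explicit polynomials divided by `D`, so `D` cancels from `η*(p*)`.
It only has to be nonzero, and indeed `D = 1 + (1 - λ_C(1 + e_C)) (1 - λ_H(1 + e_H))` with both
factors in `(-1, 1]` because `e_H, e_C ∈ [0, 1)`. -/

open Real Set

lemma exp_neg_mul_mem_Ico {β ω : ℝ} (hβ : 0 < β) (hω : 0 < ω) : rexp (-β * ω) ∈ Ico 0 1 :=
  ⟨(exp_pos _).le, exp_lt_one_iff.mpr (by nlinarith)⟩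

lemma one_add_mul_pos_of_mem_Ioc {a b : ℝ} (ha : a ∈ Ioc (-1) 1) (hb : b ∈ Ioc (-1) 1) :
    0 < 1 + a * b := by
  obtain ⟨ha₀, ha₁⟩ := ha
  obtain ⟨hb₀, hb₁⟩ := hb
  nlinarith [mul_pos (neg_lt_iff_pos_add'.mp ha₀) (neg_lt_iff_pos_add'.mp hb₀),
    mul_nonneg (sub_nonneg.mpr ha₁) (sub_nonneg.mpr hb₁)]

lemma one_sub_mul_one_add_mem_Ioc {lam e : ℝ} (hlam : lam ∈ Icc 0 1) (he : e ∈ Ico 0 1) :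
    1 - lam * (1 + e) ∈ Ioc (-1) 1 := by
  obtain ⟨hlam₀, hlam₁⟩ := hlam
  obtain ⟨he₀, he₁⟩ := he
  constructor <;> nlinarith

namespace ThreeStroke

variable (lamH lamC eH eC : ℝ)

/-- `p* = cyclicNum / cyclicDen` in the variables `eH = e^{-β_H ω}`, `eC = e^{-β_C ω}`;
`e^{-(β_H + β_C) ω}` becomes `eH * eC`. -/
def cyclicNum : ℝ := 1 - lamH * (1 - lamC) - lamC * (1 - lamH) * eC

def cyclicDen : ℝ :=
  2 - lamC * (1 - lamH) - lamH - lamC * (1 - lamH) * eC - lamH * (1 - lamC) * eH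
    + lamH * lamC * (eH * eC)

/-- The heat `Q_H(p) / ω` drawn from the hot bath. -/
def heat (p : ℝ) : ℝ := lamH * (p * eH + p - 1)

/-- `W*(p) / Q_H(p)`, as `W*(p) = ω (1 - 2 g(p))` and `g(p) = p - Q_H(p) / ω`. -/
noncomputable def efficiency (p : ℝ) : ℝ := 1 - (2 * p - 1 - heat lamH eH p) / heat lamH eH p

lemma cyclicDen_eq_one_add_mul :
    cyclicDen lamH lamC eH eC = 1 + (1 - lamC * (1 + eC)) * (1 - lamH * (1 + eH)) := by
  unfold cyclicDen
  ring

variable {lamH lamC eH eC}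

lemma cyclicDen_pos (hlamH : lamH ∈ Icc 0 1) (hlamC : lamC ∈ Icc 0 1) (heH : eH ∈ Ico 0 1)
    (heC : eC ∈ Ico 0 1) : 0 < cyclicDen lamH lamC eH eC := by
  rw [cyclicDen_eq_one_add_mul]
  exact one_add_mul_pos_of_mem_Ioc (one_sub_mul_one_add_mem_Ioc hlamC heC)
    (one_sub_mul_one_add_mem_Ioc hlamH heH)

lemma heat_cyclicState (hD : cyclicDen lamH lamC eH eC ≠ 0) :
    heat lamH eH (cyclicNum lamH lamC eC / cyclicDen lamH lamC eH eC) =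
      lamH * (eH - (1 - lamC) - lamC * (eH * eC)) / cyclicDen lamH lamC eH eC := by
  unfold heat
  field_simp
  unfold cyclicNum cyclicDen
  ring

lemma two_mul_sub_one_sub_heat_cyclicState (hD : cyclicDen lamH lamC eH eC ≠ 0) :
    2 * (cyclicNum lamH lamC eC / cyclicDen lamH lamC eH eC) - 1
        - heat lamH eH (cyclicNum lamH lamC eC / cyclicDen lamH lamC eH eC) =
      lamC * (1 - lamH * eH - (1 - lamH) * eC) / cyclicDen lamH lamC eH eC := by
  rw [heat_cyclicState hD]
  field_simp
  unfold cyclicNum cyclicDen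
  ring

theorem efficiency_cyclicState (hD : cyclicDen lamH lamC eH eC ≠ 0) :
    efficiency lamH eH (cyclicNum lamH lamC eC / cyclicDen lamH lamC eH eC) =
      1 - lamC * (1 - lamH * eH - (1 - lamH) * eC) /
        (lamH * (eH - (1 - lamC) - lamC * (eH * eC))) := by
  rw [efficiency, two_mul_sub_one_sub_heat_cyclicState hD, heat_cyclicState hD,
    div_div_div_cancel_right₀ hD]

end ThreeStroke

open ThreeStroke in
/-- Closed form for the maximum efficiency of the three-stroke engine:
the efficiency function `η*` evaluated at the cyclic state `p* = N / D`. -/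
theorem three_stroke_max_efficiency
    (βH βC ω lamH lamC : ℝ) (hβH : 0 < βH) (hβC : 0 < βC) (hω : 0 < ω)
    (hlamH : lamH ∈ Set.Icc (0:ℝ) 1) (hlamC : lamC ∈ Set.Icc (0:ℝ) 1) :
    let N : ℝ := 1 - lamH * (1 - lamC) - lamC * (1 - lamH) * Real.exp (-βC * ω)
    let D : ℝ := 2 - lamC * (1 - lamH) - lamH - lamC * (1 - lamH) * Real.exp (-βC * ω)
      - lamH * (1 - lamC) * Real.exp (-βH * ω) + lamH * lamC * Real.exp (-(βH + βC) * ω)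
    let pstar : ℝ := N / D
    let ηstar : ℝ → ℝ := fun p =>
      1 - (2 * p - 1 - lamH * (p * Real.exp (-βH * ω) + p - 1)) /
        (lamH * (p * Real.exp (-βH * ω) + p - 1))
    lamH * (pstar * Real.exp (-βH * ω) + pstar - 1) ≠ 0 →
    lamH * (Real.exp (-βH * ω) - (1 - lamC) - lamC * Real.exp (-(βH + βC) * ω)) ≠ 0 →
    ηstar pstar =
      1 - lamC * (1 - lamH * Real.exp (-βH * ω) - (1 - lamH) * Real.exp (-βC * ω)) /
        (lamH * (Real.exp (-βH * ω) - (1 - lamC) - lamC * Real.exp (-(βH + βC) * ω))) := by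
  intro N D pstar ηstar _ _
  have hexp : rexp (-(βH + βC) * ω) = rexp (-βH * ω) * rexp (-βC * ω) := by
    rw [← exp_add]
    ring_nf
  have hD := cyclicDen_pos hlamH hlamC (exp_neg_mul_mem_Ico hβH hω) (exp_neg_mul_mem_Ico hβC hω)
  simp only [ηstar, pstar, N, D, hexp]
  exact efficiency_cyclicState hD.ne'
end

section
/- Let β_H, β_C, ω > 0. For λ_H = λ_C = 1, the unique cyclic state of the three-stroke engine is p* = 1/(1 + e^{−(β_H+β_C)ω}), the work per cycle at p* equals ω·(2e^{−β_Hω}/(1 + e^{−(β_H+β_C)ω}) − 1), and the efficiency at p* equals 1 − (1 − e^{−β_Hω})/(e^{−β_Hω} − e^{−(β_H+β_C)ω}). -/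
/-!
Write `r = e^{-(βH+βC)ω}` and `a = e^{-βH ω}`. The cycle map `q ↦ 1 - q r` is affine with slope
`-r ≠ -1`, so its only fixed point is `1/(1+r)`. At that point the work and the heat are
`ω (2a - 1 - r)/(1+r)` and `ω (a - r)/(1+r)`, and their ratio is `1 - (1 - a)/(a - r)`; the heat
is nonzero because `a - r = e^{-βH ω}(1 - e^{-βC ω}) > 0`.
-/

namespace ThreeStroke

variable {a r : ℝ}

theorem one_sub_mul_eq_self_iff (hr : 1 + r ≠ 0) (q : ℝ) :
    1 - q * r = q ↔ q = 1 / (1 + r) := by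
  rw [eq_div_iff hr]
  constructor <;> intro h <;> linarith

theorem work_at_fixedPoint (hr : 1 + r ≠ 0) :
    2 * (1 / (1 + r)) * a - 1 = (2 * a - 1 - r) / (1 + r) := by
  field_simp
  ring

theorem heat_at_fixedPoint (hr : 1 + r ≠ 0) :
    1 / (1 + r) * a + 1 / (1 + r) - 1 = (a - r) / (1 + r) := by
  field_simp
  ring

theorem efficiency_at_fixedPoint {ω : ℝ} (hω : ω ≠ 0) (hr : 1 + r ≠ 0) (har : a - r ≠ 0) :
    ω * (2 * (1 / (1 + r)) * a - 1) / (ω * (1 / (1 + r) * a + 1 / (1 + r) - 1)) =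
      1 - (1 - a) / (a - r) := by
  rw [mul_div_mul_left _ _ hω, work_at_fixedPoint hr, heat_at_fixedPoint hr,
    div_div_div_cancel_right₀ hr]
  field_simp
  ring

end ThreeStroke

open ThreeStroke in
theorem three_stroke_unrestricted_performance_general
    (βH βC ω : ℝ) (hβC : 0 < βC) (hω : 0 < ω) :
    let pstar : ℝ := 1 / (1 + Real.exp (-(βH + βC) * ω))
    (1 - pstar * Real.exp (-(βH + βC) * ω) = pstar ∧
      ∀ q : ℝ, 1 - q * Real.exp (-(βH + βC) * ω) = q → q = pstar) ∧
    ω * (2 * pstar * Real.exp (-βH * ω) - 1) =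
      ω * (2 * Real.exp (-βH * ω) / (1 + Real.exp (-(βH + βC) * ω)) - 1) ∧
    ω * (2 * pstar * Real.exp (-βH * ω) - 1) /
        (ω * (pstar * Real.exp (-βH * ω) + pstar - 1)) =
      1 - (1 - Real.exp (-βH * ω)) /
        (Real.exp (-βH * ω) - Real.exp (-(βH + βC) * ω)) := by
  intro pstar
  have hr : 1 + Real.exp (-(βH + βC) * ω) ≠ 0 := by positivity
  have hcold : Real.exp (-(βH + βC) * ω) < Real.exp (-βH * ω) :=
    Real.exp_lt_exp.mpr (by linarith [mul_pos hβC hω])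
  refine ⟨⟨(one_sub_mul_eq_self_iff hr pstar).mpr rfl,
      fun q => (one_sub_mul_eq_self_iff hr q).mp⟩, by ring, ?_⟩
  exact efficiency_at_fixedPoint hω.ne' hr (sub_ne_zero.mpr hcold.ne')

/-- For unrestricted thermal operations (`λH = λC = 1`): the unique cyclic
state is `p* = 1/(1 + e^{-(βH+βC)ω})`, the work per cycle at `p*` equals
`ω (2 e^{-βH ω}/(1 + e^{-(βH+βC)ω}) - 1)` and the efficiency at `p*` equals
`1 - (1 - e^{-βH ω})/(e^{-βH ω} - e^{-(βH+βC)ω})`. -/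
theorem three_stroke_unrestricted_performance
    (βH βC ω : ℝ) (hβH : 0 < βH) (hβC : 0 < βC) (hω : 0 < ω) :
    let pstar : ℝ := 1 / (1 + Real.exp (-(βH + βC) * ω))
    (1 - pstar * Real.exp (-(βH + βC) * ω) = pstar ∧
      ∀ q : ℝ, 1 - q * Real.exp (-(βH + βC) * ω) = q → q = pstar) ∧
    ω * (2 * pstar * Real.exp (-βH * ω) - 1) =
      ω * (2 * Real.exp (-βH * ω) / (1 + Real.exp (-(βH + βC) * ω)) - 1) ∧
    ω * (2 * pstar * Real.exp (-βH * ω) - 1) /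
        (ω * (pstar * Real.exp (-βH * ω) + pstar - 1)) =
      1 - (1 - Real.exp (-βH * ω)) /
        (Real.exp (-βH * ω) - Real.exp (-(βH + βC) * ω)) :=
  three_stroke_unrestricted_performance_general βH βC ω hβC hω
end

section
/- Let ω > 0 and 0 < β_H < β_C. For λ_H = 1 and λ_C = 1/(1 + e^{−β_Cω}), the work per cycle of the three-stroke engine at its unique cyclic state equals ω·(2e^{−β_Hω}/(1 + e^{−β_Cω}) − 1), and its efficiency equals 1 − (1 − e^{−β_Hω})/(e^{−β_Hω} − e^{−β_Cω}). -/
/-!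
Write `e_H = e^{-β_H ω}` and `e_C = e^{-β_C ω}`. With `λ_C = 1/(1 + e_C)` the cold stroke
`q ↦ λ_C (1 - q e_C) + (1 - λ_C) q` forgets its input: it is the constant `1/(1 + e_C)`, the
Gibbs ground population. Hence the cycle map is constant, its unique fixed point is
`p = 1/(1 + e_C)`, and work and heat are evaluated there; the heat `ω (e_H - e_C)/(1 + e_C)` is
nonzero because `e_C < e_H`.
-/

namespace OpenCycleEngine

variable {eH eC : ℝ}

theorem coldStroke_eq_gibbs (heC : 1 + eC ≠ 0) (q : ℝ) :
    1 / (1 + eC) * (1 - q * eC) + (1 - 1 / (1 + eC)) * q = 1 / (1 + eC) := by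
  field_simp
  ring

theorem heat_at_gibbs (heC : 1 + eC ≠ 0) (ω : ℝ) :
    ω * (1 / (1 + eC) - (1 - 1 / (1 + eC) * eH)) = ω * (eH - eC) / (1 + eC) := by
  field_simp
  ring

theorem efficiency_at_gibbs (heC : 1 + eC ≠ 0) (hne : eH ≠ eC) {ω : ℝ} (hω : ω ≠ 0) :
    ω * (1 - 2 * (1 - 1 / (1 + eC) * eH)) / (ω * (eH - eC) / (1 + eC)) =
      1 - (1 - eH) / (eH - eC) := by
  have : eH - eC ≠ 0 := sub_ne_zero.2 hne
  field_simp
  ring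

end OpenCycleEngine

open OpenCycleEngine in
theorem open_cycle_engine_performance_general
    (βH βC ω : ℝ) (hω : 0 < ω) (hβ : βH < βC) :
    let lamH : ℝ := 1
    let lamC : ℝ := 1 / (1 + Real.exp (-βC * ω))
    -- heat stroke on the ground population
    let g : ℝ → ℝ := fun p => lamH * (1 - p * Real.exp (-βH * ω)) + (1 - lamH) * p
    -- ground population after the swap work stroke
    let z : ℝ → ℝ := fun p => 1 - g p
    -- full cycle map (cold stroke after the swap)
    let Φ : ℝ → ℝ := fun p => lamC * (1 - z p * Real.exp (-βC * ω)) + (1 - lamC) * z p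
    let W : ℝ → ℝ := fun p => ω * (1 - 2 * g p)
    let QH : ℝ → ℝ := fun p => ω * (p - g p)
    (∃! p : ℝ, Φ p = p) ∧
    ∀ p : ℝ, Φ p = p →
      W p = ω * (2 * Real.exp (-βH * ω) / (1 + Real.exp (-βC * ω)) - 1) ∧
      W p / QH p =
        1 - (1 - Real.exp (-βH * ω)) / (Real.exp (-βH * ω) - Real.exp (-βC * ω)) := by
  intro lamH lamC g z Φ W QH
  set eH := Real.exp (-βH * ω)
  set eC := Real.exp (-βC * ω)
  have heC : 1 + eC ≠ 0 := by positivity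
  have hlt : eC < eH := Real.exp_lt_exp.2 (by nlinarith)
  have hg : ∀ p, g p = 1 - p * eH := fun p => by simp only [g, lamH, eH]; ring
  have hΦ : ∀ p, Φ p = 1 / (1 + eC) := fun p => coldStroke_eq_gibbs heC (z p)
  refine ⟨⟨_, hΦ _, fun p hp => hp.symm.trans (hΦ p)⟩, fun p hp => ?_⟩
  have hp' : p = 1 / (1 + eC) := hp.symm.trans (hΦ p)
  have hW : W p = ω * (1 - 2 * (1 - 1 / (1 + eC) * eH)) := by simp only [W, hg, hp']
  have hQH : QH p = ω * (eH - eC) / (1 + eC) := by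
    simp only [QH, hg, hp']
    exact heat_at_gibbs heC ω
  rw [hW, hQH]
  exact ⟨by ring, efficiency_at_gibbs heC hlt.ne' hω.ne'⟩

/-- Open-cycle engine: with `λH = 1` and `λC = 1/(1 + e^{-βC ω})` (full
thermalization in the cold stroke), the three-stroke engine has a unique
cyclic state, at which the work per cycle equals
`ω (2 e^{-βH ω}/(1 + e^{-βC ω}) - 1)` and the efficiency equals
`1 - (1 - e^{-βH ω})/(e^{-βH ω} - e^{-βC ω})`. -/
theorem open_cycle_engine_performance
    (βH βC ω : ℝ) (hω : 0 < ω) (hβH : 0 < βH) (hβ : βH < βC) :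
    let lamH : ℝ := 1
    let lamC : ℝ := 1 / (1 + Real.exp (-βC * ω))
    -- heat stroke on the ground population
    let g : ℝ → ℝ := fun p => lamH * (1 - p * Real.exp (-βH * ω)) + (1 - lamH) * p
    -- ground population after the swap work stroke
    let z : ℝ → ℝ := fun p => 1 - g p
    -- full cycle map (cold stroke after the swap)
    let Φ : ℝ → ℝ := fun p => lamC * (1 - z p * Real.exp (-βC * ω)) + (1 - lamC) * z p
    let W : ℝ → ℝ := fun p => ω * (1 - 2 * g p)
    let QH : ℝ → ℝ := fun p => ω * (p - g p)
    (∃! p : ℝ, Φ p = p) ∧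
    ∀ p : ℝ, Φ p = p →
      W p = ω * (2 * Real.exp (-βH * ω) / (1 + Real.exp (-βC * ω)) - 1) ∧
      W p / QH p =
        1 - (1 - Real.exp (-βH * ω)) / (Real.exp (-βH * ω) - Real.exp (-βC * ω)) :=
  open_cycle_engine_performance_general βH βC ω hω hβ
end

section
/- Let β_H, ω > 0 and λ_H ∈ (0,1]. The function η*(p) := 1 − (2p − 1 − λ_H(p e^{−β_Hω} + p − 1)) / (λ_H(p e^{−β_Hω} + p − 1)) is strictly increasing on the set {p ∈ ℝ : p e^{−β_Hω} + p − 1 > 0}, i.e. on (1/(1 + e^{−β_Hω}), ∞). -/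
/-! Writing `a = 1 + e^{-β_H ω}`, the efficiency is `η*(p) = 2 - (2p - 1) / (λ_H (a p - 1))`.
Since `a < 2`, the Möbius map `p ↦ (2p - 1) / (a p - 1)` is strictly decreasing on the
branch `a p > 1`, so `η*` is strictly increasing there. -/

open Real

lemma strictAntiOn_div_of_lt {a b : ℝ} (hab : a < b) :
    StrictAntiOn (fun p : ℝ => (b * p - 1) / (a * p - 1)) {p | 0 < a * p - 1} := by
  intro x hx y hy hxy
  rw [div_lt_div_iff₀ hy hx]
  nlinarith [mul_pos (sub_pos.mpr hab) (sub_pos.mpr hxy)]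

lemma one_sub_div_mul_eq {n c d : ℝ} (hc : c ≠ 0) (hd : d ≠ 0) :
    1 - (n - c * d) / (c * d) = 2 - n / d / c := by
  field_simp
  ring

/-- The efficiency `η*(p)` of the three-stroke engine is strictly increasing
in the ground population `p` on the region where the heat drawn from the hot
bath is positive. -/
theorem efficiency_strictMonoOn
    (βH ω lamH : ℝ) (hβH : 0 < βH) (hω : 0 < ω)
    (hlamH : lamH ∈ Set.Ioc (0:ℝ) 1) :
    StrictMonoOn
      (fun p : ℝ =>
        1 - (2 * p - 1 - lamH * (p * Real.exp (-βH * ω) + p - 1)) /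
          (lamH * (p * Real.exp (-βH * ω) + p - 1)))
      {p : ℝ | p * Real.exp (-βH * ω) + p - 1 > 0} := by
  obtain ⟨hlam, -⟩ := hlamH
  set e := exp (-βH * ω)
  have he : e + 1 < 2 := by
    have : e < 1 := exp_lt_one_iff.mpr (by nlinarith)
    linarith
  have hD : ∀ p, p * e + p - 1 = (e + 1) * p - 1 := fun p => by ring
  intro x hx y hy hxy
  simp only [Set.mem_ofPred_eq, hD] at hx hy ⊢
  rw [one_sub_div_mul_eq hlam.ne' hx.ne', one_sub_div_mul_eq hlam.ne' hy.ne']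
  gcongr 2 - ?_ / lamH
  exact strictAntiOn_div_of_lt he hx hy hxy
end

section
/- Let β_H, β_C, ω > 0 and λ_H ∈ [0,1]. For λ_C ∈ [0,1] define p(λ_C) := (1 − λ_H(1−λ_C) − λ_C(1−λ_H)e^{−β_Cω}) / (2 − λ_C(1−λ_H) − λ_H − λ_C(1−λ_H)e^{−β_Cω} − λ_H(1−λ_C)e^{−β_Hω} + λ_H λ_C e^{−(β_C+β_H)ω}). Then the denominator is positive for every λ_C ∈ [0,1], and λ_C ↦ p(λ_C) is strictly increasing on [0,1]; in particular, p(λ_C) ≤ p(λ_C^max) for all 0 ≤ λ_C ≤ λ_C^max ≤ 1. -/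
/-!
With `a = exp (-βC ω)` and `b = exp (-βH ω)` in `[0, 1)`, numerator and denominator of `p` are
affine in `λC`. A ratio of affine maps with positive denominator is strictly increasing exactly
when its determinant `n₁ d₀ - n₀ d₁` is positive, and here the determinant collapses to
`λH (1 - b) + (1 - λH) (1 - a) > 0`. The denominator is positive at both ends of `[0, 1]`,
hence on all of it.
-/

open Set

lemma pos_of_pos_endpoints_of_mem_Icc {c₀ c₁ x : ℝ} (h₀ : 0 < c₀) (h₁ : 0 < c₀ + c₁)
    (hx : x ∈ Icc (0 : ℝ) 1) : 0 < c₀ + c₁ * x := by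
  obtain ⟨hx₀, hx₁⟩ := hx
  rcases le_total 0 c₁ with hc | hc <;> nlinarith

lemma strictMonoOn_affine_div_affine {s : Set ℝ} {n₀ n₁ d₀ d₁ : ℝ}
    (hd : ∀ x ∈ s, 0 < d₀ + d₁ * x) (hdet : 0 < n₁ * d₀ - n₀ * d₁) :
    StrictMonoOn (fun x => (n₀ + n₁ * x) / (d₀ + d₁ * x)) s := by
  intro x hx y hy hxy
  rw [div_lt_div_iff₀ (hd x hx) (hd y hy)]
  have cross : (n₀ + n₁ * y) * (d₀ + d₁ * x) - (n₀ + n₁ * x) * (d₀ + d₁ * y)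
      = (y - x) * (n₁ * d₀ - n₀ * d₁) := by ring
  nlinarith [mul_pos (sub_pos.2 hxy) hdet]

lemma cyclic_denom_pos {a b L x : ℝ} (ha₀ : 0 ≤ a) (ha₁ : a < 1) (hb₀ : 0 ≤ b) (hb₁ : b < 1)
    (hL : L ∈ Icc (0 : ℝ) 1) (hx : x ∈ Icc (0 : ℝ) 1) :
    0 < (2 - L - L * b) + (L * b + L * a * b - (1 - L) * (1 + a)) * x := by
  obtain ⟨hL₀, hL₁⟩ := hL
  refine pos_of_pos_endpoints_of_mem_Icc ?_ ?_ hx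
  · nlinarith
  · nlinarith [mul_nonneg (mul_nonneg hL₀ ha₀) hb₀]

lemma cyclic_det_pos {a b L : ℝ} (ha₁ : a < 1) (hb₁ : b < 1) (hL : L ∈ Icc (0 : ℝ) 1) :
    0 < (L - (1 - L) * a) * (2 - L - L * b)
      - (1 - L) * (L * b + L * a * b - (1 - L) * (1 + a)) := by
  obtain ⟨hL₀, hL₁⟩ := hL
  have det : (L - (1 - L) * a) * (2 - L - L * b)
      - (1 - L) * (L * b + L * a * b - (1 - L) * (1 + a))
      = L * (1 - b) + (1 - L) * (1 - a) := by ring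
  rw [det]
  rcases le_total a b with hab | hab
  · nlinarith [mul_nonneg (sub_nonneg.2 hL₁) (sub_nonneg.2 hab)]
  · nlinarith [mul_nonneg hL₀ (sub_nonneg.2 hab)]

/-- The cyclic ground population `p(λC)` of the three-stroke engine has a
positive denominator and is strictly increasing in the cold-stroke weight
`λC` on `[0,1]`; in particular it is maximized at `λC = λC^max`. -/
theorem cyclic_population_monotone_in_lamC
    (βH βC ω lamH : ℝ) (hβH : 0 < βH) (hβC : 0 < βC) (hω : 0 < ω)
    (hlamH : lamH ∈ Set.Icc (0:ℝ) 1) :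
    let denom : ℝ → ℝ := fun lamC =>
      2 - lamC * (1 - lamH) - lamH - lamC * (1 - lamH) * Real.exp (-βC * ω)
        - lamH * (1 - lamC) * Real.exp (-βH * ω)
        + lamH * lamC * Real.exp (-(βC + βH) * ω)
    let p : ℝ → ℝ := fun lamC =>
      (1 - lamH * (1 - lamC) - lamC * (1 - lamH) * Real.exp (-βC * ω)) / denom lamC
    (∀ lamC ∈ Set.Icc (0:ℝ) 1, 0 < denom lamC) ∧
    StrictMonoOn p (Set.Icc (0:ℝ) 1) ∧
    ∀ lamC lamCmax : ℝ, 0 ≤ lamC → lamC ≤ lamCmax → lamCmax ≤ 1 →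
      p lamC ≤ p lamCmax := by
  intro denom p
  set a := Real.exp (-βC * ω)
  set b := Real.exp (-βH * ω)
  have ha₁ : a < 1 := Real.exp_lt_one_iff.2 (by nlinarith)
  have hb₁ : b < 1 := Real.exp_lt_one_iff.2 (by nlinarith)
  have hdenom_eq : ∀ x, denom x
      = (2 - lamH - lamH * b) + (lamH * b + lamH * a * b - (1 - lamH) * (1 + a)) * x := by
    intro x
    simp only [denom, a, b, neg_add, add_mul, Real.exp_add]
    ring
  have hdenom : ∀ x ∈ Icc (0 : ℝ) 1, 0 < denom x := fun x hx =>
    hdenom_eq x ▸ cyclic_denom_pos (Real.exp_pos _).le ha₁ (Real.exp_pos _).le hb₁ hlamH hx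
  have hmono : StrictMonoOn p (Icc 0 1) := by
    convert strictMonoOn_affine_div_affine (fun x hx => hdenom_eq x ▸ hdenom x hx)
      (cyclic_det_pos ha₁ hb₁ hlamH) using 2 with x
    simp only [p, hdenom_eq]
    ring
  refine ⟨hdenom, hmono, fun x y hx₀ hxy hy₁ => ?_⟩
  exact hmono.monotoneOn ⟨hx₀, hxy.trans hy₁⟩ ⟨hx₀.trans hxy, hy₁⟩ hxy
end

section
/- Let β, ω > 0 and let γ := (1/(1 + e^{−βω}), e^{−βω}/(1 + e^{−βω})) ∈ ℝ². A 2×2 real matrix T with nonnegative entries whose columns each sum to 1 satisfies T·γ = γ if and only if there exists a (necessarily unique) λ ∈ [0,1] such that T = λ·E_β + (1−λ)·I, where E_β is the matrix with first row (1 − e^{−βω}, 1) and second row (e^{−βω}, 0) and I is the 2×2 identity matrix. -/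
/-!
A column-stochastic `2 × 2` matrix `T` is determined by its off-diagonal entries, and it fixes
a vector `v` exactly when detailed balance `T 1 0 * v 0 = T 0 1 * v 1` holds. For the Gibbs
vector this reads `T 1 0 = T 0 1 * e^{-βω}`, and these are precisely the entries of
`λ • Eβ + (1 - λ) • 1` with `λ = T 0 1`; the nonnegative entries of the column `j = 1` put this
`λ` in `[0, 1]`.
-/

open Matrix

section ColumnStochastic

variable {R : Type*} [CommRing R] {T : Matrix (Fin 2) (Fin 2) R}

theorem mulVec_eq_self_iff_detailed_balance (hcol : ∀ j, T 0 j + T 1 j = 1) (v : Fin 2 → R) :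
    T *ᵥ v = v ↔ T 1 0 * v 0 = T 0 1 * v 1 := by
  simp only [funext_iff, Fin.forall_fin_two, mulVec, dotProduct, Fin.sum_univ_two]
  constructor
  · rintro ⟨hv0, -⟩
    linear_combination -hv0 + v 0 * hcol 0
  · intro h
    constructor
    · linear_combination -h + v 0 * hcol 0
    · linear_combination h + v 1 * hcol 1

theorem smul_add_sub_smul_one_eq (e lam : R) :
    lam • !![1 - e, 1; e, 0] + (1 - lam) • (1 : Matrix (Fin 2) (Fin 2) R) =
      !![1 - lam * e, lam; lam * e, 1 - lam] := by
  ext i j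
  fin_cases i <;> fin_cases j <;> simp [mul_sub]

theorem eq_smul_add_sub_smul_one_iff (hcol : ∀ j, T 0 j + T 1 j = 1) (e lam : R) :
    T = lam • !![1 - e, 1; e, 0] + (1 - lam) • 1 ↔ T 0 1 = lam ∧ T 1 0 = lam * e := by
  have h00 : T 0 0 = 1 - T 1 0 := eq_sub_of_add_eq (hcol 0)
  have h11 : T 1 1 = 1 - T 0 1 := eq_sub_of_add_eq' (hcol 1)
  conv_lhs => rw [eta_fin_two T, smul_add_sub_smul_one_eq, h00, h11]
  simp only [EmbeddingLike.apply_eq_iff_eq, vecCons_inj, and_true]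
  grind

end ColumnStochastic

theorem mulVec_gibbs_eq_self_iff {K : Type*} [Field K] {T : Matrix (Fin 2) (Fin 2) K}
    (hcol : ∀ j, T 0 j + T 1 j = 1) {e : K} (he : 1 + e ≠ 0) :
    T *ᵥ ![1 / (1 + e), e / (1 + e)] = ![1 / (1 + e), e / (1 + e)] ↔ T 1 0 = T 0 1 * e := by
  rw [mulVec_eq_self_iff_detailed_balance hcol]
  simp only [cons_val_zero, cons_val_one]
  rw [mul_one_div, ← mul_div_assoc, div_left_inj' he]

theorem gibbs_stochastic_qubit_characterization_general
    (β ω : ℝ)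
    (T : Matrix (Fin 2) (Fin 2) ℝ)
    (hpos : ∀ i j, 0 ≤ T i j)
    (hcol : ∀ j, T 0 j + T 1 j = 1) :
    let E : ℝ := Real.exp (-β * ω)
    let γ : Fin 2 → ℝ := ![1 / (1 + E), E / (1 + E)]
    let Eβ : Matrix (Fin 2) (Fin 2) ℝ := !![1 - E, 1; E, 0]
    (T.mulVec γ = γ ↔
      ∃! lam : ℝ, lam ∈ Set.Icc (0:ℝ) 1 ∧
        T = lam • Eβ + (1 - lam) • (1 : Matrix (Fin 2) (Fin 2) ℝ)) := by
  intro E γ Eβ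
  have hE : 1 + E ≠ 0 := (add_pos one_pos (Real.exp_pos _)).ne'
  simp only [γ, Eβ, mulVec_gibbs_eq_self_iff hcol hE, eq_smul_add_sub_smul_one_iff hcol]
  constructor
  · intro h
    have hT01_le : T 0 1 ≤ 1 := by linarith [hcol 1, hpos 1 1]
    exact ⟨T 0 1, ⟨⟨hpos 0 1, hT01_le⟩, rfl, h⟩, fun lam ⟨_, hlam, _⟩ => hlam.symm⟩
  · rintro ⟨lam, ⟨-, rfl, h⟩, -⟩
    exact h

/-- A 2×2 column-stochastic matrix fixes the qubit Gibbs distribution iff it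
is a (unique) convex combination of the extremal thermal process `Eβ` and the
identity. -/
theorem gibbs_stochastic_qubit_characterization
    (β ω : ℝ) (hβ : 0 < β) (hω : 0 < ω)
    (T : Matrix (Fin 2) (Fin 2) ℝ)
    (hpos : ∀ i j, 0 ≤ T i j)
    (hcol : ∀ j, T 0 j + T 1 j = 1) :
    let E : ℝ := Real.exp (-β * ω)
    let γ : Fin 2 → ℝ := ![1 / (1 + E), E / (1 + E)]
    let Eβ : Matrix (Fin 2) (Fin 2) ℝ := !![1 - E, 1; E, 0]
    (T.mulVec γ = γ ↔
      ∃! lam : ℝ, lam ∈ Set.Icc (0:ℝ) 1 ∧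
        T = lam • Eβ + (1 - lam) • (1 : Matrix (Fin 2) (Fin 2) ℝ)) :=
  gibbs_stochastic_qubit_characterization_general β ω T hpos hcol
end

section
/- Let d ≥ 1 be an integer and β, ω > 0. Let H_S = ω|1⟩⟨1| on ℂ², H_E = ω·Σ_{n=0}^{d} n|n⟩⟨n| on ℂ^{d+1}, γ_E the diagonal matrix with entries e^{−βnω}/Z for n = 0,…,d where Z := Σ_{n=0}^{d} e^{−βnω}, and for p ∈ [0,1] let σ_p := diag(p, 1−p). Let H_tot := H_S ⊗ I_{d+1} + I_2 ⊗ H_E on ℂ² ⊗ ℂ^{d+1}. Then for every unitary 2(d+1)×2(d+1) complex matrix U with U·H_tot = H_tot·U, there exists λ ∈ [0, λ^max] with λ^max := (1 − e^{−βωd})/(1 − e^{−βω(d+1)}) such that for every p ∈ [0,1] the output ground population p'(U,p) := Σ_{n=0}^{d} ⟨(0,n)|U(σ_p ⊗ γ_E)U†|(0,n)⟩ satisfies p'(U,p) = (1−λ)·p + λ·(1 − p·e^{−βω}). -/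
/-!
For a unitary `U` the matrix `|U_{xy}|²` is doubly stochastic, and energy conservation lets it
connect only levels `(s, n)` of equal total energy `s + n`. So the ground level `(0, n)` exchanges
weight only with `(1, n - 1)`, whose bath population is larger by the factor `e^{βω}`. With `λ`
the Gibbs-weighted flow from excited into ground levels, the row sums give
`p' = p (1 - e^{-βω} λ) + (1 - p) λ`, and the column sums bound `λ` by the Gibbs weight of the
levels `(1, m)` with `m < d` (the level `(1, d)` has no ground partner), which is `λ^max`.
-/

open Matrix Kronecker

namespace Matrix

variable {n : Type*} [Fintype n] [DecidableEq n]

theorem apply_eq_zero_of_commute_diagonal {R : Type*} [CommRing R] [NoZeroDivisors R]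
    {U : Matrix n n R} {e : n → R} (h : Commute U (diagonal e)) {x y : n} (hxy : e x ≠ e y) :
    U x y = 0 := by
  have hentry : U x y * e y = e x * U x y := by
    simpa only [mul_diagonal, diagonal_mul] using congrFun (congrFun h.eq x) y
  have hmul : (e x - e y) * U x y = 0 := by linear_combination -hentry
  exact (mul_eq_zero.mp hmul).resolve_left (sub_ne_zero.mpr hxy)

theorem normSq_mem_doublyStochastic {U : Matrix n n ℂ} (hU : U ∈ unitaryGroup n ℂ) :
    (of fun i j => Complex.normSq (U i j)) ∈ doublyStochastic ℝ n := by
  rw [mem_doublyStochastic_iff_sum]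
  refine ⟨fun i j => Complex.normSq_nonneg _, fun i => ?_, fun j => ?_⟩
  · have h := congrFun (congrFun (mem_unitaryGroup_iff.mp hU) i) i
    simp only [mul_apply, star_apply, Complex.star_def, Complex.mul_conj, one_apply_eq] at h
    exact_mod_cast h
  · have h := congrFun (congrFun (mem_unitaryGroup_iff'.mp hU) j) j
    simp only [mul_apply, star_apply, Complex.star_def, mul_comm (starRingEnd ℂ _),
      Complex.mul_conj, one_apply_eq] at h
    exact_mod_cast h

theorem mul_diagonal_mul_conjTranspose_apply_self (U : Matrix n n ℂ) (w : n → ℝ) (i : n) :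
    (U * diagonal (fun j => (w j : ℂ)) * Uᴴ) i i
      = ((∑ j, Complex.normSq (U i j) * w j : ℝ) : ℂ) := by
  push_cast
  rw [mul_apply]
  simp only [mul_diagonal, conjTranspose_apply, Complex.star_def]
  refine Finset.sum_congr rfl fun j _ => ?_
  rw [← Complex.mul_conj]
  ring

theorem diagonal_two_kronecker_diagonal_ofReal {ι : Type*} [DecidableEq ι] (a b : ℝ)
    (g : ι → ℝ) :
    !![(a : ℂ), 0; 0, (b : ℂ)] ⊗ₖ diagonal (fun i => (g i : ℂ))
      = diagonal fun y => ((![a, b] y.1 * g y.2 : ℝ) : ℂ) := by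
  rw [← diagonal_vec2, diagonal_kronecker_diagonal]
  congr 1
  funext ⟨s, i⟩
  fin_cases s <;> simp

end Matrix

namespace FiniteBath

/-- Total energy of the level `(s, n)`, in units of `ω`. -/
def energy {d : ℕ} (x : Fin 2 × Fin (d + 1)) : ℕ := x.1 + x.2

theorem hamiltonian_eq_diagonal_energy (d : ℕ) (ω : ℝ) :
    !![0, 0; 0, (ω : ℂ)] ⊗ₖ (1 : Matrix (Fin (d + 1)) (Fin (d + 1)) ℂ)
        + (1 : Matrix (Fin 2) (Fin 2) ℂ)
          ⊗ₖ diagonal (fun n : Fin (d + 1) => (ω : ℂ) * ((n : ℕ) : ℂ))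
      = diagonal fun x => ((ω * energy x : ℝ) : ℂ) := by
  rw [← diagonal_vec2, ← diagonal_one, ← diagonal_one, diagonal_kronecker_diagonal,
    diagonal_kronecker_diagonal, diagonal_add]
  congr 1
  funext ⟨s, n⟩
  fin_cases s <;> simp [energy]
  ring

/-- Gibbs distribution of the truncated oscillator with Boltzmann factor `q = e^{-βω}`. -/
noncomputable def gibbs (q : ℝ) (d : ℕ) (n : Fin (d + 1)) : ℝ :=
  q ^ (n : ℕ) / ∑ m : Fin (d + 1), q ^ (m : ℕ)

section Gibbs

variable {q : ℝ} {d : ℕ}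

theorem gibbs_nonneg (hq : 0 ≤ q) (n : Fin (d + 1)) : 0 ≤ gibbs q d n :=
  div_nonneg (pow_nonneg hq _) (Finset.sum_nonneg fun _ _ => pow_nonneg hq _)

theorem sum_gibbs (hq : 0 ≤ q) : ∑ n, gibbs q d n = 1 := by
  have hZ : 0 < ∑ m : Fin (d + 1), q ^ (m : ℕ) := by
    rw [Fin.sum_univ_succ]
    simpa using add_pos_of_pos_of_nonneg one_pos (Finset.sum_nonneg fun _ _ => pow_nonneg hq _)
  simp only [gibbs, ← Finset.sum_div, div_self hZ.ne']

theorem gibbs_of_val_eq_succ {n m : Fin (d + 1)} (h : (n : ℕ) = m + 1) :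
    gibbs q d n = q * gibbs q d m := by
  unfold gibbs
  rw [h, pow_succ, mul_comm _ q, mul_div_assoc]

theorem sum_gibbs_castSucc (hq : q ≠ 1) :
    ∑ m : Fin d, gibbs q d m.castSucc = (1 - q ^ d) / (1 - q ^ (d + 1)) := by
  have hq' : q - 1 ≠ 0 := sub_ne_zero.mpr hq
  simp only [gibbs, Fin.val_castSucc, ← Finset.sum_div]
  rw [Fin.sum_univ_eq_sum_range (q ^ ·), Fin.sum_univ_eq_sum_range (q ^ ·),
    geom_sum_eq hq, geom_sum_eq hq, div_div_div_cancel_right₀ hq', ← neg_sub,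
    ← neg_sub (1 : ℝ), neg_div_neg_eq]

theorem exp_mul_div_sum_eq_gibbs (c : ℝ) (n : Fin (d + 1)) :
    Real.exp (c * n) / ∑ m : Fin (d + 1), Real.exp (c * m) = gibbs (Real.exp c) d n := by
  simp only [gibbs, mul_comm c, Real.exp_nat_mul]

end Gibbs

def decayWeight {d : ℕ} (M : Matrix (Fin 2 × Fin (d + 1)) (Fin 2 × Fin (d + 1)) ℝ)
    (g : Fin (d + 1) → ℝ) : ℝ :=
  ∑ n, ∑ m, M (0, n) (1, m) * g m

section Transitions

variable {d : ℕ} {M : Matrix (Fin 2 × Fin (d + 1)) (Fin 2 × Fin (d + 1)) ℝ}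
  {g : Fin (d + 1) → ℝ}

theorem decayWeight_nonneg (hM : ∀ x y, 0 ≤ M x y) (hg : ∀ m, 0 ≤ g m) :
    0 ≤ decayWeight M g :=
  Finset.sum_nonneg fun _ _ => Finset.sum_nonneg fun m _ => mul_nonneg (hM _ _) (hg m)

theorem decayWeight_le_sum_castSucc (hM : ∀ x y, 0 ≤ M x y) (hcol : ∀ y, ∑ x, M x y = 1)
    (hE : ∀ x y, energy x ≠ energy y → M x y = 0) (hg : ∀ m, 0 ≤ g m) :
    decayWeight M g ≤ ∑ m : Fin d, g m.castSucc := by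
  have hlast : ∑ n, M (0, n) (1, Fin.last d) = 0 :=
    Finset.sum_eq_zero fun n _ => hE _ _ <| by simp [energy]; omega
  have hcol_le : ∀ m, ∑ n, M (0, n) (1, m) ≤ 1 := fun m => by
    have h := hcol (1, m)
    rw [Fintype.sum_prod_type, Fin.sum_univ_two] at h
    linarith [Finset.sum_nonneg fun n (_ : n ∈ Finset.univ) => hM (1, n) (1, m)]
  calc decayWeight M g = ∑ m, (∑ n, M (0, n) (1, m)) * g m := by
        simp only [decayWeight, Finset.sum_mul]
        exact Finset.sum_comm
    _ = ∑ m : Fin d, (∑ n, M (0, n) (1, m.castSucc)) * g m.castSucc := by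
        rw [Fin.sum_univ_castSucc, hlast, zero_mul, add_zero]
    _ ≤ ∑ m : Fin d, g m.castSucc :=
        Finset.sum_le_sum fun m _ => mul_le_of_le_one_left (hg _) (hcol_le _)

theorem sum_ground_population_eq {q : ℝ} (hrow : ∀ x, ∑ y, M x y = 1)
    (hE : ∀ x y, energy x ≠ energy y → M x y = 0) (hg : ∑ n, g n = 1)
    (hg_succ : ∀ n m : Fin (d + 1), (n : ℕ) = m + 1 → g n = q * g m) (p : ℝ) :
    ∑ n, ∑ y, M (0, n) y * (![p, 1 - p] y.1 * g y.2)
      = (1 - decayWeight M g) * p + decayWeight M g * (1 - p * q) := by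
  have hdiag : ∀ n m, m ≠ n → M (0, n) (0, m) = 0 := fun n m hmn =>
    hE _ _ <| by simpa [energy, Fin.val_inj] using hmn.symm
  have hrow0 : ∀ n, M (0, n) (0, n) + ∑ m, M (0, n) (1, m) = 1 := fun n => by
    have h := hrow (0, n)
    rwa [Fintype.sum_prod_type, Fin.sum_univ_two,
      Finset.sum_eq_single n (fun m _ => hdiag n m) (by simp)] at h
  -- `(0, n)` only meets `(1, m)` for `n = m + 1`, where `g n = q g m`.
  have hdecay : ∀ n m, M (0, n) (1, m) * g n = q * (M (0, n) (1, m) * g m) := fun n m => by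
    by_cases h : (n : ℕ) = m + 1
    · rw [hg_succ n m h]; ring
    · rw [hE _ _ (by simpa [energy, add_comm] using h)]; ring
  have hrow_ground : ∀ n, ∑ y, M (0, n) y * (![p, 1 - p] y.1 * g y.2)
      = p * (g n - q * ∑ m, M (0, n) (1, m) * g m) + (1 - p) * ∑ m, M (0, n) (1, m) * g m := by
    intro n
    rw [Fintype.sum_prod_type, Fin.sum_univ_two,
      Finset.sum_eq_single n (fun m _ hmn => by rw [hdiag n m hmn, zero_mul]) (by simp),
      Finset.mul_sum, ← Finset.sum_congr rfl fun m _ => hdecay n m, ← Finset.sum_mul]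
    simp only [Matrix.cons_val_zero, Matrix.cons_val_one]
    rw [Finset.sum_congr rfl fun m _ => mul_left_comm (M (0, n) (1, m)) (1 - p) (g m),
      ← Finset.mul_sum]
    linear_combination p * g n * hrow0 n
  simp only [hrow_ground, Finset.sum_add_distrib, ← Finset.mul_sum, Finset.sum_sub_distrib, hg]
  unfold decayWeight
  ring

end Transitions

end FiniteBath

open FiniteBath

theorem finite_bath_thermal_operation_range_general
    (d : ℕ) (β ω : ℝ) (hβ : 0 < β) (hω : 0 < ω) :
    let HS : Matrix (Fin 2) (Fin 2) ℂ := !![0, 0; 0, (ω : ℂ)]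
    let HE : Matrix (Fin (d + 1)) (Fin (d + 1)) ℂ :=
      Matrix.diagonal fun n => (ω : ℂ) * ((n : ℕ) : ℂ)
    let Z : ℝ := ∑ n : Fin (d + 1), Real.exp (-β * ω * ((n : ℕ) : ℝ))
    let γE : Matrix (Fin (d + 1)) (Fin (d + 1)) ℂ :=
      Matrix.diagonal fun n => ((Real.exp (-β * ω * ((n : ℕ) : ℝ)) / Z : ℝ) : ℂ)
    let σ : ℝ → Matrix (Fin 2) (Fin 2) ℂ := fun p => !![((p : ℝ) : ℂ), 0; 0, ((1 - p : ℝ) : ℂ)]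
    let Htot : Matrix (Fin 2 × Fin (d + 1)) (Fin 2 × Fin (d + 1)) ℂ :=
      HS ⊗ₖ (1 : Matrix (Fin (d + 1)) (Fin (d + 1)) ℂ)
        + (1 : Matrix (Fin 2) (Fin 2) ℂ) ⊗ₖ HE
    let lamMax : ℝ :=
      (1 - Real.exp (-β * ω * (d : ℝ))) / (1 - Real.exp (-β * ω * ((d : ℝ) + 1)))
    ∀ U : Matrix (Fin 2 × Fin (d + 1)) (Fin 2 × Fin (d + 1)) ℂ,
      U ∈ Matrix.unitaryGroup (Fin 2 × Fin (d + 1)) ℂ →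
      U * Htot = Htot * U →
      ∃ lam : ℝ, lam ∈ Set.Icc 0 lamMax ∧
        ∀ p : ℝ, p ∈ Set.Icc (0:ℝ) 1 →
          (∑ n : Fin (d + 1),
              (U * (σ p ⊗ₖ γE) * Uᴴ) ((0 : Fin 2), n) ((0 : Fin 2), n)) =
          (((1 - lam) * p + lam * (1 - p * Real.exp (-β * ω)) : ℝ) : ℂ) := by
  intro HS HE Z γE σ Htot lamMax U hU hcomm
  set q := Real.exp (-β * ω)
  have hq : 0 ≤ q := (Real.exp_pos _).le
  have hq_ne_one : q ≠ 1 := by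
    simpa [q, Real.exp_eq_one_iff] using And.intro hβ.ne' hω.ne'
  have hcomm_diag : Commute U (diagonal fun x => ((ω * energy x : ℝ) : ℂ)) := by
    rw [← hamiltonian_eq_diagonal_energy]
    exact hcomm
  obtain ⟨hM, hrow, hcol⟩ := mem_doublyStochastic_iff_sum.mp (normSq_mem_doublyStochastic hU)
  set M := of fun x y => Complex.normSq (U x y)
  have hE : ∀ x y, energy x ≠ energy y → M x y = 0 := fun x y hxy => by
    have hω_energy : ((ω * energy x : ℝ) : ℂ) ≠ ((ω * energy y : ℝ) : ℂ) := by
      simpa [hω.ne'] using hxy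
    simp [M, apply_eq_zero_of_commute_diagonal hcomm_diag hω_energy]
  refine ⟨decayWeight M (gibbs q d), ⟨decayWeight_nonneg hM (gibbs_nonneg hq), ?_⟩,
    fun p _ => ?_⟩
  · calc _ ≤ _ := decayWeight_le_sum_castSucc hM hcol hE (gibbs_nonneg hq)
      _ = lamMax := by
        rw [sum_gibbs_castSucc hq_ne_one, ← Real.exp_nat_mul, ← Real.exp_nat_mul]
        simp only [lamMax]
        push_cast
        ring_nf
  · have hρ : σ p ⊗ₖ γE
        = diagonal fun y => ((![p, 1 - p] y.1 * gibbs q d y.2 : ℝ) : ℂ) := by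
      simp only [γE, Z, exp_mul_div_sum_eq_gibbs]
      exact diagonal_two_kronecker_diagonal_ofReal p (1 - p) (gibbs q d)
    simp only [hρ, mul_diagonal_mul_conjTranspose_apply_self, ← Complex.ofReal_sum]
    exact congrArg _ <| (sum_ground_population_eq hrow hE (sum_gibbs hq)
      (fun _ _ => gibbs_of_val_eq_succ) p).trans (by ring)

/-- Finite-bath theorem (necessity): every energy-conserving unitary on a
two-level system coupled to a resonant truncated harmonic-oscillator bath of
dimension `d+1` induces, on diagonal system states, a mixture of the identity
and the extremal thermal process with weight `λ ∈ [0, λ^max]`, where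
`λ^max = (1 - e^{-βωd})/(1 - e^{-βω(d+1)})`. -/
theorem finite_bath_thermal_operation_range
    (d : ℕ) (hd : 1 ≤ d) (β ω : ℝ) (hβ : 0 < β) (hω : 0 < ω) :
    let HS : Matrix (Fin 2) (Fin 2) ℂ := !![0, 0; 0, (ω : ℂ)]
    let HE : Matrix (Fin (d + 1)) (Fin (d + 1)) ℂ :=
      Matrix.diagonal fun n => (ω : ℂ) * ((n : ℕ) : ℂ)
    let Z : ℝ := ∑ n : Fin (d + 1), Real.exp (-β * ω * ((n : ℕ) : ℝ))
    let γE : Matrix (Fin (d + 1)) (Fin (d + 1)) ℂ :=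
      Matrix.diagonal fun n => ((Real.exp (-β * ω * ((n : ℕ) : ℝ)) / Z : ℝ) : ℂ)
    let σ : ℝ → Matrix (Fin 2) (Fin 2) ℂ := fun p => !![((p : ℝ) : ℂ), 0; 0, ((1 - p : ℝ) : ℂ)]
    let Htot : Matrix (Fin 2 × Fin (d + 1)) (Fin 2 × Fin (d + 1)) ℂ :=
      HS ⊗ₖ (1 : Matrix (Fin (d + 1)) (Fin (d + 1)) ℂ)
        + (1 : Matrix (Fin 2) (Fin 2) ℂ) ⊗ₖ HE
    let lamMax : ℝ :=
      (1 - Real.exp (-β * ω * (d : ℝ))) / (1 - Real.exp (-β * ω * ((d : ℝ) + 1)))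
    ∀ U : Matrix (Fin 2 × Fin (d + 1)) (Fin 2 × Fin (d + 1)) ℂ,
      U ∈ Matrix.unitaryGroup (Fin 2 × Fin (d + 1)) ℂ →
      U * Htot = Htot * U →
      ∃ lam : ℝ, lam ∈ Set.Icc 0 lamMax ∧
        ∀ p : ℝ, p ∈ Set.Icc (0:ℝ) 1 →
          (∑ n : Fin (d + 1),
              (U * (σ p ⊗ₖ γE) * Uᴴ) ((0 : Fin 2), n) ((0 : Fin 2), n)) =
          (((1 - lam) * p + lam * (1 - p * Real.exp (-β * ω)) : ℝ) : ℂ) :=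
  finite_bath_thermal_operation_range_general d β ω hβ hω
end

section
/- Let d ≥ 1 be an integer and β, ω > 0, and let λ^max := (1 − e^{−βωd})/(1 − e^{−βω(d+1)}). With H_S = ω|1⟩⟨1| on ℂ², H_E = ω·Σ_{n=0}^{d} n|n⟩⟨n| on ℂ^{d+1}, γ_E the diagonal matrix with entries e^{−βnω}/Z for Z := Σ_{n=0}^{d} e^{−βnω}, σ_p := diag(p, 1−p), and H_tot := H_S ⊗ I_{d+1} + I_2 ⊗ H_E: for every λ ∈ [0, λ^max] there exists a unitary 2(d+1)×2(d+1) complex matrix U with U·H_tot = H_tot·U such that for every p ∈ [0,1], Σ_{n=0}^{d} ⟨(0,n)|U(σ_p ⊗ γ_E)U†|(0,n)⟩ = (1−λ)·p + λ·(1 − p·e^{−βω}). -/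
/-!
Energy conservation only lets the unitary mix `|0, n+1⟩` with `|1, n⟩`, both of energy
`(n+1)ω`. Rotating every such pair by one angle `θ` (a direct sum of Givens rotations) moves the
fraction `sin²θ` of the population of `|1, n⟩` to `|0, n+1⟩` and back. Summed against the thermal
weights `e^{-βωn}/Z`, the ground population becomes `p - sin²θ·(p e^{-βω} - (1 - p))·λ^max`, so
`sin²θ = λ/λ^max` realizes the weight `λ`.
-/

open Matrix Kronecker

section GivensRotation

variable {A : Type*} [Ring A] [StarRing A] [Algebra ℝ A]

/-- For a partial isometry `L` with `L * L = 0`, this rotates each plane spanned by `v` and `L v`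
(`v` in the range of `star L`) by the angle of cosine `c` and sine `s`, and fixes the rest. -/
def givensRotation (L : A) (c s : ℝ) : A :=
  1 + (c - 1) • (L * star L + star L * L) + s • (L - star L)

variable {L : A} {c s : ℝ}

theorem star_givensRotation [StarModule ℝ A] :
    star (givensRotation L c s) = givensRotation L c (-s) := by
  simp only [givensRotation, star_add, star_one, star_smul, star_mul, star_star, star_sub,
    star_trivial]
  module

theorem givensRotation_mul_givensRotation_neg (hL : L * star L * L = L) (hL₂ : L * L = 0)
    (hcs : c ^ 2 + s ^ 2 = 1) : givensRotation L c s * givensRotation L c (-s) = 1 := by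
  have hL' : star L * L * star L = star L := by simpa [mul_assoc] using congrArg star hL
  have hL₂' : star L * star L = 0 := by simpa using congrArg star hL₂
  have hLL : ∀ X, X * L * L = 0 := fun X => by rw [mul_assoc, hL₂, mul_zero]
  have hLL' : ∀ X, X * star L * star L = 0 := fun X => by rw [mul_assoc, hL₂', mul_zero]
  simp only [givensRotation, mul_add, add_mul, mul_sub, sub_mul, smul_mul_assoc, mul_smul_comm,
    one_mul, mul_one, ← mul_assoc, hL, hL', hL₂, hL₂', hLL, hLL', zero_mul]
  linear_combination (norm := module) hcs • (L * star L + star L * L)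

theorem givensRotation_mem_unitary [StarModule ℝ A] (hL : L * star L * L = L) (hL₂ : L * L = 0)
    (hcs : c ^ 2 + s ^ 2 = 1) : givensRotation L c s ∈ unitary A := by
  rw [Unitary.mem_iff, star_givensRotation]
  refine ⟨?_, givensRotation_mul_givensRotation_neg hL hL₂ hcs⟩
  simpa using givensRotation_mul_givensRotation_neg (s := -s) hL hL₂ (by simpa using hcs)

theorem star_givensRotation_mul_mul_givensRotation [StarModule ℝ A] {P : A}
    (hL : L * star L * L = L) (hL₂ : L * L = 0) (hP : star P = P) (hPL : P * L = L)
    (hLP : L * P = 0) :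
    star (givensRotation L c s) * P * givensRotation L c s =
      P + (c ^ 2 - 1) • (L * star L) + (c * s) • (L + star L) + s ^ 2 • (star L * L) := by
  have hL' : star L * L * star L = star L := by simpa [mul_assoc] using congrArg star hL
  have hL₂' : star L * star L = 0 := by simpa using congrArg star hL₂
  have hPL' : star L * P = star L := by simpa [hP] using congrArg star hPL
  have hLP' : P * star L = 0 := by simpa [hP] using congrArg star hLP
  have hLP_left : ∀ X, X * L * P = 0 := fun X => by rw [mul_assoc, hLP, mul_zero]
  have hPL'_left : ∀ X, X * star L * P = X * star L := fun X => by rw [mul_assoc, hPL']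
  have hLL' : ∀ X, X * star L * star L = 0 := fun X => by rw [mul_assoc, hL₂', mul_zero]
  rw [star_givensRotation]
  simp only [givensRotation, mul_add, add_mul, mul_sub, sub_mul, smul_mul_assoc, mul_smul_comm,
    one_mul, mul_one, ← mul_assoc, hL, hL', hL₂', hPL, hLP, hPL', hLP', hLP_left, hPL'_left, hLL',
    zero_mul]
  module

theorem Commute.givensRotation {H : A} (h : Commute H L) (h' : Commute H (star L)) :
    Commute H (givensRotation L c s) :=
  ((Commute.one_right H).add_right (((h.mul_right h').add_right (h'.mul_right h)).smul_right _))
    |>.add_right ((h.sub_right h').smul_right _)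

end GivensRotation

namespace Matrix

variable {m n α : Type*}

theorem diagonal_mul_single [Fintype n] [DecidableEq n] [NonUnitalNonAssocSemiring α] (f : n → α) (i j : n) (a : α) :
    diagonal f * single i j a = single i j (f i * a) := by
  ext k l
  by_cases hk : i = k <;> simp [single_apply, hk, diagonal_mul]

theorem single_mul_diagonal [Fintype n] [DecidableEq n] [NonUnitalNonAssocSemiring α] (f : n → α) (i j : n) (a : α) :
    single i j a * diagonal f = single i j (a * f j) := by
  ext k l
  by_cases hl : j = l <;> simp [single_apply, hl, mul_diagonal]

theorem trace_kronecker_mul_kronecker [Fintype m] [Fintype n] [CommSemiring α] (A C : Matrix m m α)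
    (B D : Matrix n n α) : trace ((A ⊗ₖ B) * (C ⊗ₖ D)) = trace (A * C) * trace (B * D) := by
  rw [← mul_kronecker_mul, trace_kronecker]

theorem trace_diagonal_div_sum [Fintype n] [DecidableEq n] (w : n → ℝ) (hw : ∑ i, w i ≠ 0) :
    trace (diagonal fun i => ((w i / ∑ j, w j : ℝ) : ℂ)) = 1 := by
  rw [trace_diagonal, ← Complex.ofReal_sum, ← Finset.sum_div, div_self hw, Complex.ofReal_one]

end Matrix

open Finset in
theorem exists_mul_geom_sum_eq (x : ℝ) (d : ℕ) {lam : ℝ}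
    (hlam : lam ∈ Set.Icc 0 ((1 - x ^ d) / (1 - x ^ (d + 1)))) :
    ∃ t ∈ Set.Icc (0 : ℝ) 1, t * ∑ i ∈ range d, x ^ i = lam * ∑ i ∈ range (d + 1), x ^ i := by
  obtain ⟨hlam₀, hlam₁⟩ := hlam
  refine ⟨lam / ((1 - x ^ d) / (1 - x ^ (d + 1))), ⟨div_nonneg hlam₀ (hlam₀.trans hlam₁),
    div_le_one_of_le₀ hlam₁ (hlam₀.trans hlam₁)⟩, ?_⟩
  rcases eq_or_ne (1 - x ^ (d + 1)) 0 with hden | hden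
  · have : lam = 0 := le_antisymm (by simpa [hden] using hlam₁) hlam₀
    simp [this]
  · rw [← mul_neg_geom_sum] at hden
    have hmax : (1 - x ^ d) / (1 - x ^ (d + 1)) * ∑ i ∈ range (d + 1), x ^ i =
        ∑ i ∈ range d, x ^ i := by
      rw [← mul_neg_geom_sum, ← mul_neg_geom_sum, mul_div_mul_left _ _ (left_ne_zero_of_mul hden),
        div_mul_cancel₀ _ (right_ne_zero_of_mul hden)]
    rw [← hmax, ← mul_assoc, div_mul_cancel_of_imp fun h => le_antisymm (h ▸ hlam₁) hlam₀]

namespace FiniteBath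

variable (d : ℕ)

/-- `∑ₙ |n+1⟩⟨n|`: the truncated raising operator without its `√(n+1)` weights. -/
def shiftUp : Matrix (Fin (d + 1)) (Fin (d + 1)) ℂ :=
  ∑ k : Fin d, single k.succ k.castSucc 1

theorem conjTranspose_shiftUp : (shiftUp d)ᴴ = ∑ k : Fin d, single k.castSucc k.succ 1 := by
  simp [shiftUp, conjTranspose_sum]

theorem shiftUp_mul_conjTranspose : shiftUp d * (shiftUp d)ᴴ = 1 - single 0 0 1 := by
  rw [conjTranspose_shiftUp, shiftUp, Finset.sum_mul_sum, ← sum_single_one, Fin.sum_univ_succ,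
    add_sub_cancel_left]
  refine Finset.sum_congr rfl fun k _ => ?_
  rw [Finset.sum_eq_single k (fun l _ hlk => single_mul_single_of_ne _ _ _ _
    (Fin.castSucc_injective _ |>.ne hlk.symm) _) (by simp)]
  simp

theorem conjTranspose_mul_shiftUp :
    (shiftUp d)ᴴ * shiftUp d = 1 - single (Fin.last d) (Fin.last d) 1 := by
  rw [conjTranspose_shiftUp, shiftUp, Finset.sum_mul_sum, ← sum_single_one, Fin.sum_univ_castSucc,
    add_sub_cancel_right]
  refine Finset.sum_congr rfl fun k _ => ?_
  rw [Finset.sum_eq_single k (fun l _ hlk => single_mul_single_of_ne _ _ _ _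
    (Fin.succ_injective _ |>.ne hlk.symm) _) (by simp)]
  simp

theorem single_zero_mul_shiftUp : single 0 0 (1 : ℂ) * shiftUp d = 0 := by
  rw [shiftUp, Finset.mul_sum]
  exact Finset.sum_eq_zero fun k _ => single_mul_single_of_ne _ _ _ _ (Fin.succ_ne_zero k).symm _

theorem shiftUp_mul_conjTranspose_mul : shiftUp d * (shiftUp d)ᴴ * shiftUp d = shiftUp d := by
  rw [shiftUp_mul_conjTranspose, sub_mul, one_mul, single_zero_mul_shiftUp, sub_zero]

theorem diagonal_mul_shiftUp (ω : ℂ) :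
    diagonal (fun n : Fin (d + 1) => ω * (n : ℕ)) * shiftUp d =
      shiftUp d * diagonal (fun n : Fin (d + 1) => ω * (n : ℕ)) + ω • shiftUp d := by
  simp only [shiftUp, Finset.mul_sum, Finset.sum_mul, Finset.smul_sum, ← Finset.sum_add_distrib,
    diagonal_mul_single, single_mul_diagonal, smul_single, ← single_add]
  refine Finset.sum_congr rfl fun k _ => congrArg _ ?_
  simp only [Fin.val_succ, Fin.val_castSucc]
  push_cast
  ring

/-- `∑ₙ |0, n+1⟩⟨1, n|`: the system hands one quantum to the bath. -/
def exchange : Matrix (Fin 2 × Fin (d + 1)) (Fin 2 × Fin (d + 1)) ℂ :=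
  single 0 1 1 ⊗ₖ shiftUp d

def groundProjector : Matrix (Fin 2 × Fin (d + 1)) (Fin 2 × Fin (d + 1)) ℂ :=
  single 0 0 1 ⊗ₖ 1

theorem star_exchange : star (exchange d) = single 1 0 1 ⊗ₖ (shiftUp d)ᴴ := by
  simp [exchange, star_eq_conjTranspose, conjTranspose_kronecker]

theorem exchange_mul_star_mul : exchange d * star (exchange d) * exchange d = exchange d := by
  rw [star_exchange, exchange, ← mul_kronecker_mul, ← mul_kronecker_mul,
    shiftUp_mul_conjTranspose_mul]
  simp

theorem exchange_mul_self : exchange d * exchange d = 0 := by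
  rw [exchange, ← mul_kronecker_mul]
  simp

theorem star_groundProjector : star (groundProjector d) = groundProjector d := by
  simp [groundProjector, star_eq_conjTranspose, conjTranspose_kronecker]

theorem groundProjector_mul_exchange : groundProjector d * exchange d = exchange d := by
  rw [groundProjector, exchange, ← mul_kronecker_mul]
  simp

theorem exchange_mul_groundProjector : exchange d * groundProjector d = 0 := by
  rw [groundProjector, exchange, ← mul_kronecker_mul]
  simp

def totalHamiltonian (ω : ℝ) : Matrix (Fin 2 × Fin (d + 1)) (Fin 2 × Fin (d + 1)) ℂ :=
  !![0, 0; 0, (ω : ℂ)] ⊗ₖ (1 : Matrix (Fin (d + 1)) (Fin (d + 1)) ℂ) +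
    (1 : Matrix (Fin 2) (Fin 2) ℂ) ⊗ₖ diagonal fun n : Fin (d + 1) => (ω : ℂ) * ((n : ℕ) : ℂ)

theorem totalHamiltonian_eq (ω : ℝ) :
    totalHamiltonian d ω = single (1 : Fin 2) 1 (ω : ℂ) ⊗ₖ (1 : Matrix (Fin (d + 1)) _ ℂ) +
      (1 : Matrix (Fin 2) (Fin 2) ℂ) ⊗ₖ diagonal fun n : Fin (d + 1) => (ω : ℂ) * ((n : ℕ) : ℂ) := by
  rw [totalHamiltonian]
  congr 2
  ext i j
  fin_cases i <;> fin_cases j <;> simp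

theorem star_totalHamiltonian (ω : ℝ) : star (totalHamiltonian d ω) = totalHamiltonian d ω := by
  simp [totalHamiltonian_eq, star_eq_conjTranspose, conjTranspose_kronecker, Pi.star_def]

theorem commute_totalHamiltonian_exchange (ω : ℝ) :
    Commute (totalHamiltonian d ω) (exchange d) := by
  rw [Commute, SemiconjBy, totalHamiltonian_eq, exchange, add_mul, mul_add, ← mul_kronecker_mul,
    ← mul_kronecker_mul, ← mul_kronecker_mul, ← mul_kronecker_mul, diagonal_mul_shiftUp,
    single_mul_single_of_ne _ _ _ _ (by decide), single_mul_single_same, zero_kronecker,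
    kronecker_add, kronecker_smul, ← smul_kronecker]
  simp only [one_mul, mul_one, smul_single, smul_eq_mul, zero_add]
  abel

theorem commute_totalHamiltonian_star_exchange (ω : ℝ) :
    Commute (totalHamiltonian d ω) (star (exchange d)) := by
  simpa [star_totalHamiltonian] using (commute_totalHamiltonian_exchange d ω).star_star

theorem sum_apply_zero_eq_trace_groundProjector_mul
    (M : Matrix (Fin 2 × Fin (d + 1)) (Fin 2 × Fin (d + 1)) ℂ) :
    ∑ n, M (0, n) (0, n) = trace (groundProjector d * M) := by
  simp [groundProjector, trace, mul_apply, Fintype.sum_prod_type, single_apply, one_apply]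

theorem sum_apply_zero_givensRotation_mul_kronecker_mul (c s : ℝ) (a b : ℂ)
    (γ : Matrix (Fin (d + 1)) (Fin (d + 1)) ℂ) :
    ∑ n, (givensRotation (exchange d) c s * (!![a, 0; 0, b] ⊗ₖ γ) *
        (givensRotation (exchange d) c s)ᴴ) (0, n) (0, n) =
      a * trace γ + (c ^ 2 - 1 : ℝ) * a * (trace γ - γ 0 0) +
        (s ^ 2 : ℝ) * b * (trace γ - γ (Fin.last d) (Fin.last d)) := by
  rw [sum_apply_zero_eq_trace_groundProjector_mul, ← star_eq_conjTranspose, ← mul_assoc,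
    ← mul_assoc, trace_mul_comm, ← mul_assoc, ← mul_assoc,
    star_givensRotation_mul_mul_givensRotation (exchange_mul_star_mul d) (exchange_mul_self d)
      (star_groundProjector d) (groundProjector_mul_exchange d) (exchange_mul_groundProjector d)]
  have hJJ : exchange d * star (exchange d) = single 0 0 1 ⊗ₖ (1 - single 0 0 1) := by
    rw [star_exchange, exchange, ← mul_kronecker_mul, shiftUp_mul_conjTranspose]
    simp
  have hJJ' : star (exchange d) * exchange d =
      single 1 1 1 ⊗ₖ (1 - single (Fin.last d) (Fin.last d) 1) := by
    rw [star_exchange, exchange, ← mul_kronecker_mul, conjTranspose_mul_shiftUp]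
    simp
  simp only [add_mul, smul_mul_assoc, trace_add, trace_smul, hJJ, hJJ']
  rw [star_exchange, exchange, groundProjector]
  simp only [trace_kronecker_mul_kronecker, trace_single_mul, sub_mul, one_mul, trace_sub]
  simp only [of_apply, cons_val', cons_val_zero, cons_val_one, cons_val_fin_one, smul_eq_mul,
    one_mul, mul_zero, zero_mul, add_zero, smul_zero, Complex.real_smul, Complex.ofReal_sub,
    Complex.ofReal_pow, Complex.ofReal_one]
  ring

end FiniteBath

open FiniteBath

theorem finite_bath_thermal_operation_achievability_general
    (d : ℕ) (β ω : ℝ) :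
    let HS : Matrix (Fin 2) (Fin 2) ℂ := !![0, 0; 0, (ω : ℂ)]
    let HE : Matrix (Fin (d + 1)) (Fin (d + 1)) ℂ :=
      Matrix.diagonal fun n => (ω : ℂ) * ((n : ℕ) : ℂ)
    let Z : ℝ := ∑ n : Fin (d + 1), Real.exp (-β * ω * ((n : ℕ) : ℝ))
    let γE : Matrix (Fin (d + 1)) (Fin (d + 1)) ℂ :=
      Matrix.diagonal fun n => ((Real.exp (-β * ω * ((n : ℕ) : ℝ)) / Z : ℝ) : ℂ)
    let σ : ℝ → Matrix (Fin 2) (Fin 2) ℂ := fun p => !![((p : ℝ) : ℂ), 0; 0, ((1 - p : ℝ) : ℂ)]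
    let Htot : Matrix (Fin 2 × Fin (d + 1)) (Fin 2 × Fin (d + 1)) ℂ :=
      HS ⊗ₖ (1 : Matrix (Fin (d + 1)) (Fin (d + 1)) ℂ)
        + (1 : Matrix (Fin 2) (Fin 2) ℂ) ⊗ₖ HE
    let lamMax : ℝ :=
      (1 - Real.exp (-β * ω * (d : ℝ))) / (1 - Real.exp (-β * ω * ((d : ℝ) + 1)))
    ∀ lam : ℝ, lam ∈ Set.Icc 0 lamMax →
      ∃ U : Matrix (Fin 2 × Fin (d + 1)) (Fin 2 × Fin (d + 1)) ℂ,
        U ∈ Matrix.unitaryGroup (Fin 2 × Fin (d + 1)) ℂ ∧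
        U * Htot = Htot * U ∧
        ∀ p : ℝ, p ∈ Set.Icc (0:ℝ) 1 →
          (∑ n : Fin (d + 1),
              (U * (σ p ⊗ₖ γE) * Uᴴ) ((0 : Fin 2), n) ((0 : Fin 2), n)) =
          (((1 - lam) * p + lam * (1 - p * Real.exp (-β * ω)) : ℝ) : ℂ) := by
  intro HS HE Z γE σ Htot lamMax lam hlam
  set x := Real.exp (-β * ω)
  have hpow (n : ℕ) : Real.exp (-β * ω * n) = x ^ n := by
    rw [← Real.exp_nat_mul, mul_comm]
  have hZ : Z = ∑ i ∈ Finset.range (d + 1), x ^ i := by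
    simp only [Z, hpow, Fin.sum_univ_eq_sum_range (x ^ ·)]
  have hZ₀ : Z ≠ 0 := (Finset.sum_pos (fun n _ => Real.exp_pos _) Finset.univ_nonempty).ne'
  have hlamMax : lamMax = (1 - x ^ d) / (1 - x ^ (d + 1)) := by
    simp only [lamMax, hpow, ← Nat.cast_succ]
  obtain ⟨t, ⟨ht₀, ht₁⟩, ht⟩ := exists_mul_geom_sum_eq x d (hlamMax ▸ hlam)
  refine ⟨givensRotation (exchange d) √(1 - t) √t,
    givensRotation_mem_unitary (exchange_mul_star_mul d) (exchange_mul_self d)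
      (by rw [Real.sq_sqrt (by linarith), Real.sq_sqrt ht₀]; ring),
    ((commute_totalHamiltonian_exchange d ω).givensRotation
      (commute_totalHamiltonian_star_exchange d ω)).eq.symm, fun p _ => ?_⟩
  rw [sum_apply_zero_givensRotation_mul_kronecker_mul, trace_diagonal_div_sum _ hZ₀,
    Real.sq_sqrt (by linarith), Real.sq_sqrt ht₀]
  simp only [γE, diagonal_apply_eq, Fin.val_zero, Fin.val_last, hpow]
  have key : p * 1 + (1 - t - 1) * p * (1 - x ^ 0 / Z) + t * (1 - p) * (1 - x ^ d / Z) =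
      (1 - lam) * p + lam * (1 - p * x) := by
    rw [hZ] at hZ₀ ⊢
    field_simp
    linear_combination (-t * p) * geom_sum_succ (x := x) (n := d) +
      t * (1 - p) * geom_sum_succ' (x := x) (n := d) + (1 - p - p * x) * ht
  exact_mod_cast key

/-- Finite-bath theorem (sufficiency): every mixing weight `λ ∈ [0, λ^max]`,
with `λ^max = (1 - e^{-βωd})/(1 - e^{-βω(d+1)})`, is realized by some
energy-conserving unitary on a two-level system coupled to a resonant
truncated harmonic-oscillator bath of dimension `d+1`. -/
theorem finite_bath_thermal_operation_achievability
    (d : ℕ) (hd : 1 ≤ d) (β ω : ℝ) (hβ : 0 < β) (hω : 0 < ω) :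
    let HS : Matrix (Fin 2) (Fin 2) ℂ := !![0, 0; 0, (ω : ℂ)]
    let HE : Matrix (Fin (d + 1)) (Fin (d + 1)) ℂ :=
      Matrix.diagonal fun n => (ω : ℂ) * ((n : ℕ) : ℂ)
    let Z : ℝ := ∑ n : Fin (d + 1), Real.exp (-β * ω * ((n : ℕ) : ℝ))
    let γE : Matrix (Fin (d + 1)) (Fin (d + 1)) ℂ :=
      Matrix.diagonal fun n => ((Real.exp (-β * ω * ((n : ℕ) : ℝ)) / Z : ℝ) : ℂ)
    let σ : ℝ → Matrix (Fin 2) (Fin 2) ℂ := fun p => !![((p : ℝ) : ℂ), 0; 0, ((1 - p : ℝ) : ℂ)]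
    let Htot : Matrix (Fin 2 × Fin (d + 1)) (Fin 2 × Fin (d + 1)) ℂ :=
      HS ⊗ₖ (1 : Matrix (Fin (d + 1)) (Fin (d + 1)) ℂ)
        + (1 : Matrix (Fin 2) (Fin 2) ℂ) ⊗ₖ HE
    let lamMax : ℝ :=
      (1 - Real.exp (-β * ω * (d : ℝ))) / (1 - Real.exp (-β * ω * ((d : ℝ) + 1)))
    ∀ lam : ℝ, lam ∈ Set.Icc 0 lamMax →
      ∃ U : Matrix (Fin 2 × Fin (d + 1)) (Fin 2 × Fin (d + 1)) ℂ,
        U ∈ Matrix.unitaryGroup (Fin 2 × Fin (d + 1)) ℂ ∧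
        U * Htot = Htot * U ∧
        ∀ p : ℝ, p ∈ Set.Icc (0:ℝ) 1 →
          (∑ n : Fin (d + 1),
              (U * (σ p ⊗ₖ γE) * Uᴴ) ((0 : Fin 2), n) ((0 : Fin 2), n)) =
          (((1 - lam) * p + lam * (1 - p * Real.exp (-β * ω)) : ℝ) : ℂ) :=
  finite_bath_thermal_operation_achievability_general d β ω
end

section
/- Let β_H, β_C, ω > 0 and let d ≥ 1 be an integer with β_Hω < d·β_Cω. Set λ_H := (1 − e^{−β_Hωd})/(1 − e^{−β_Hω(d+1)}) and λ_C := (1 − e^{−β_Cωd})/(1 − e^{−β_Cω(d+1)}), and assume λ_H·(e^{−β_Hω} − (1−λ_C) − λ_C e^{−(β_H+β_C)ω}) ≠ 0. Then 1 − λ_C·(1 − λ_H e^{−β_Hω} − (1−λ_H)e^{−β_Cω}) / (λ_H·(e^{−β_Hω} − (1−λ_C) − λ_C e^{−(β_H+β_C)ω})) = 1 − ((1 − e^{−dβ_Cω})(1 − e^{−β_Hω})(1 − e^{−(β_C+dβ_H)ω})) / ((1 − e^{−β_Cω})(e^{−β_Hω} − e^{−dβ_Cω})(1 − e^{−dβ_Hω})).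 -/
/-!
With `x = e^{-β_H ω}` and `y = e^{-β_C ω}` the weights are `λ_H = (1 - x^d)/(1 - x^{d+1})` and
`λ_C = (1 - y^d)/(1 - y^{d+1})`. The heat terms then factor as
`1 - λ_H x - (1 - λ_H) y = (1 - x)(1 - y x^d)/(1 - x^{d+1})` and
`x - (1 - λ_C) - λ_C x y = (1 - y)(x - y^d)/(1 - y^{d+1})`, and the denominators
`1 - x^{d+1}`, `1 - y^{d+1}` cancel in the efficiency quotient.
-/

open Real

namespace FiniteBath

/-- The maximal stroke weight for a bath truncated at dimension `d + 1` with Boltzmann factor `q`. -/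
noncomputable def maxWeight (q : ℝ) (d : ℕ) : ℝ := (1 - q ^ d) / (1 - q ^ (d + 1))

theorem exp_maxWeight (a : ℝ) (d : ℕ) :
    (1 - exp (a * d)) / (1 - exp (a * (d + 1))) = maxWeight (exp a) d := by
  rw [maxWeight, ← exp_nat_mul, ← exp_nat_mul]
  push_cast
  ring_nf

variable {x y : ℝ} {d : ℕ}

theorem one_sub_maxWeight_mul_sub (hx : x ^ (d + 1) ≠ 1) :
    1 - maxWeight x d * x - (1 - maxWeight x d) * y
      = (1 - x) * (1 - y * x ^ d) / (1 - x ^ (d + 1)) := by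
  have : 1 - x ^ (d + 1) ≠ 0 := sub_ne_zero.mpr hx.symm
  rw [maxWeight, eq_div_iff this]
  field_simp
  ring

theorem sub_one_sub_maxWeight_sub (hy : y ^ (d + 1) ≠ 1) :
    x - (1 - maxWeight y d) - maxWeight y d * (x * y)
      = (1 - y) * (x - y ^ d) / (1 - y ^ (d + 1)) := by
  have : 1 - y ^ (d + 1) ≠ 0 := sub_ne_zero.mpr hy.symm
  rw [maxWeight, eq_div_iff this]
  field_simp
  ring

theorem maxWeight_efficiency_quotient (hx : x ^ (d + 1) ≠ 1) (hy : y ^ (d + 1) ≠ 1) :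
    maxWeight y d * (1 - maxWeight x d * x - (1 - maxWeight x d) * y) /
        (maxWeight x d * (x - (1 - maxWeight y d) - maxWeight y d * (x * y)))
      = (1 - y ^ d) * (1 - x) * (1 - y * x ^ d) / ((1 - y) * (x - y ^ d) * (1 - x ^ d)) := by
  have hx' : 1 - x ^ (d + 1) ≠ 0 := sub_ne_zero.mpr hx.symm
  have hy' : 1 - y ^ (d + 1) ≠ 0 := sub_ne_zero.mpr hy.symm
  rw [one_sub_maxWeight_mul_sub hx, sub_one_sub_maxWeight_sub hy, maxWeight, maxWeight]
  field_simp

theorem pow_succ_ne_one_of_lt_one (hx₀ : 0 ≤ x) (hx₁ : x < 1) (d : ℕ) : x ^ (d + 1) ≠ 1 :=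
  (pow_lt_one₀ hx₀ hx₁ d.succ_ne_zero).ne

theorem exp_neg_mul_lt_one {β ω : ℝ} (hβ : 0 < β) (hω : 0 < ω) : exp (-β * ω) < 1 :=
  exp_lt_one_iff.mpr (by nlinarith)

end FiniteBath

open FiniteBath in
theorem finite_bath_efficiency_closed_form_general
    (βH βC ω : ℝ) (d : ℕ)
    (hβH : 0 < βH) (hβC : 0 < βC) (hω : 0 < ω) :
    let lamH : ℝ :=
      (1 - Real.exp (-βH * ω * (d : ℝ))) / (1 - Real.exp (-βH * ω * ((d : ℝ) + 1)))
    let lamC : ℝ :=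
      (1 - Real.exp (-βC * ω * (d : ℝ))) / (1 - Real.exp (-βC * ω * ((d : ℝ) + 1)))
    lamH * (Real.exp (-βH * ω) - (1 - lamC) - lamC * Real.exp (-(βH + βC) * ω)) ≠ 0 →
    1 - lamC * (1 - lamH * Real.exp (-βH * ω) - (1 - lamH) * Real.exp (-βC * ω)) /
        (lamH * (Real.exp (-βH * ω) - (1 - lamC) - lamC * Real.exp (-(βH + βC) * ω))) =
      1 - ((1 - Real.exp (-(d : ℝ) * βC * ω)) * (1 - Real.exp (-βH * ω)) *
            (1 - Real.exp (-(βC + (d : ℝ) * βH) * ω))) /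
          ((1 - Real.exp (-βC * ω)) * (Real.exp (-βH * ω) - Real.exp (-(d : ℝ) * βC * ω)) *
            (1 - Real.exp (-(d : ℝ) * βH * ω))) := by
  intro lamH lamC _
  simp only [lamH, lamC, exp_maxWeight]
  have hxy : exp (-(βH + βC) * ω) = exp (-βH * ω) * exp (-βC * ω) := by
    rw [← exp_add]; ring_nf
  have hyd : exp (-(d : ℝ) * βC * ω) = exp (-βC * ω) ^ d := by
    rw [← exp_nat_mul]; ring_nf
  have hxd : exp (-(d : ℝ) * βH * ω) = exp (-βH * ω) ^ d := by
    rw [← exp_nat_mul]; ring_nf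
  have hyxd : exp (-(βC + (d : ℝ) * βH) * ω) = exp (-βC * ω) * exp (-βH * ω) ^ d := by
    rw [← exp_nat_mul, ← exp_add]; ring_nf
  rw [hxy, hyd, hxd, hyxd, maxWeight_efficiency_quotient
    (pow_succ_ne_one_of_lt_one (exp_pos _).le (exp_neg_mul_lt_one hβH hω) d)
    (pow_succ_ne_one_of_lt_one (exp_pos _).le (exp_neg_mul_lt_one hβC hω) d)]

/-- Substituting the finite-bath maximal weights
`λ_H = (1 - e^{-βH ω d})/(1 - e^{-βH ω (d+1)})` and
`λ_C = (1 - e^{-βC ω d})/(1 - e^{-βC ω (d+1)})` into the closed-form maximum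
efficiency yields the paper's finite-bath efficiency `η_d`. -/
theorem finite_bath_efficiency_closed_form
    (βH βC ω : ℝ) (d : ℕ) (hd : 1 ≤ d)
    (hβH : 0 < βH) (hβC : 0 < βC) (hω : 0 < ω)
    (hdim : βH * ω < (d : ℝ) * (βC * ω)) :
    let lamH : ℝ :=
      (1 - Real.exp (-βH * ω * (d : ℝ))) / (1 - Real.exp (-βH * ω * ((d : ℝ) + 1)))
    let lamC : ℝ :=
      (1 - Real.exp (-βC * ω * (d : ℝ))) / (1 - Real.exp (-βC * ω * ((d : ℝ) + 1)))
    lamH * (Real.exp (-βH * ω) - (1 - lamC) - lamC * Real.exp (-(βH + βC) * ω)) ≠ 0 →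
    1 - lamC * (1 - lamH * Real.exp (-βH * ω) - (1 - lamH) * Real.exp (-βC * ω)) /
        (lamH * (Real.exp (-βH * ω) - (1 - lamC) - lamC * Real.exp (-(βH + βC) * ω))) =
      1 - ((1 - Real.exp (-(d : ℝ) * βC * ω)) * (1 - Real.exp (-βH * ω)) *
            (1 - Real.exp (-(βC + (d : ℝ) * βH) * ω))) /
          ((1 - Real.exp (-βC * ω)) * (Real.exp (-βH * ω) - Real.exp (-(d : ℝ) * βC * ω)) *
            (1 - Real.exp (-(d : ℝ) * βH * ω))) :=
  finite_bath_efficiency_closed_form_general βH βC ω d hβH hβC hω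
end

section
/- Let ω ≥ 0, p ∈ [0,1], σ_p := diag(p, 1−p) and H := diag(0, ω) as 2×2 complex matrices. Then for every U in the unitary group of 2×2 complex matrices, Re Tr(H·(σ_p − U σ_p U†)) ≤ ω·max(0, 1 − 2p), and there exists a unitary U attaining equality (when p ≤ 1/2 the swap matrix X = |0⟩⟨1| + |1⟩⟨0| attains it, and when p ≥ 1/2 the identity attains it). -/
/-!
For a unitary `U`, the excited population of `U σ_p Uᴴ` is `p |U₁₀|² + (1 - p) |U₁₁|²`, and the
rows of `U` are unit vectors, so the extracted work collapses to `ω (1 - 2p) |U₁₀|²` with `|U₁₀|² ∈ [0, 1]`. It is maximised by `|U₁₀|² = 1`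
(the swap) when `1 - 2p ≥ 0` and by `|U₁₀|² = 0` (the identity) otherwise.
-/

open Matrix

section Unitary

variable {𝕜 n : Type*} [RCLike 𝕜] [Fintype n] [DecidableEq n]

theorem Matrix.mul_diagonal_mul_conjTranspose_apply_self_s17 (U : Matrix n n 𝕜) (d : n → 𝕜)
    (i : n) : (U * diagonal d * Uᴴ) i i = ∑ j, d j * (‖U i j‖ ^ 2 : ℝ) := by
  rw [mul_apply]
  refine Finset.sum_congr rfl fun j _ => ?_
  rw [mul_diagonal, conjTranspose_apply, RCLike.star_def, RCLike.ofReal_pow, ← RCLike.mul_conj]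
  ring

theorem Matrix.sum_norm_sq_row_eq_one_of_mem_unitaryGroup {U : Matrix n n 𝕜}
    (hU : U ∈ unitaryGroup n 𝕜) (i : n) : ∑ j, ‖U i j‖ ^ 2 = 1 := by
  have hrow := U.mul_diagonal_mul_conjTranspose_apply_self_s17 (fun _ => 1) i
  rw [diagonal_one, Matrix.mul_one, ← star_eq_conjTranspose, Unitary.mul_star_self_of_mem hU,
    one_apply_eq] at hrow
  simp only [one_mul] at hrow
  exact_mod_cast hrow.symm

end Unitary

theorem Matrix.trace_diagonal_mul {R n : Type*} [Fintype n] [DecidableEq n]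
    [NonUnitalNonAssocSemiring R] (e : n → R) (A : Matrix n n R) :
    trace (diagonal e * A) = ∑ i, e i * A i i := by
  simp [trace, diagonal_mul]

theorem mul_le_max_zero_of_mem_Icc {a t : ℝ} (ht : t ∈ Set.Icc (0 : ℝ) 1) :
    a * t ≤ max 0 a := by
  rcases le_total a 0 with ha | ha
  · exact (mul_nonpos_of_nonpos_of_nonneg ha ht.1).trans (le_max_left _ _)
  · exact (mul_le_of_le_one_right ha ht.2).trans (le_max_right _ _)

theorem swap_mem_unitaryGroup {R : Type*} [CommRing R] [StarRing R] :
    !![0, 1; 1, 0] ∈ unitaryGroup (Fin 2) R := by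
  rw [mem_unitaryGroup_iff, star_eq_conjTranspose, eta_fin_two !![0, 1; 1, 0]ᴴ]
  simp [one_fin_two]

theorem qubit_work_eq (ω p : ℝ) {U : Matrix (Fin 2) (Fin 2) ℂ} (hU : U ∈ unitaryGroup (Fin 2) ℂ) :
    (trace (!![0, 0; 0, (ω : ℂ)] * (!![((p : ℝ) : ℂ), 0; 0, ((1 - p : ℝ) : ℂ)] -
      U * !![((p : ℝ) : ℂ), 0; 0, ((1 - p : ℝ) : ℂ)] * Uᴴ))).re =
      ω * (1 - 2 * p) * ‖U 1 0‖ ^ 2 := by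
  have hrow := sum_norm_sq_row_eq_one_of_mem_unitaryGroup hU 1
  rw [Fin.sum_univ_two] at hrow
  rw [← diagonal_vec2, ← diagonal_vec2, trace_diagonal_mul, Fin.sum_univ_two]
  simp only [Matrix.sub_apply, mul_diagonal_mul_conjTranspose_apply_self_s17, Fin.sum_univ_two,
    diagonal_apply_eq, cons_val_zero, cons_val_one, zero_mul, zero_add]
  simp only [RCLike.ofReal_eq_complex_ofReal, Complex.re_ofReal_mul, Complex.sub_re,
    Complex.add_re, Complex.ofReal_re]
  linear_combination -(ω * (1 - p)) * hrow

theorem qubit_ergotropy_general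
    (ω p : ℝ) (hω : 0 ≤ ω) :
    let H : Matrix (Fin 2) (Fin 2) ℂ := !![0, 0; 0, (ω : ℂ)]
    let σp : Matrix (Fin 2) (Fin 2) ℂ := !![((p : ℝ) : ℂ), 0; 0, ((1 - p : ℝ) : ℂ)]
    let X : Matrix (Fin 2) (Fin 2) ℂ := !![0, 1; 1, 0]
    (∀ U : Matrix (Fin 2) (Fin 2) ℂ, U ∈ Matrix.unitaryGroup (Fin 2) ℂ →
        (Matrix.trace (H * (σp - U * σp * Uᴴ))).re ≤ ω * max 0 (1 - 2 * p)) ∧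
    (∃ U ∈ Matrix.unitaryGroup (Fin 2) ℂ,
        (Matrix.trace (H * (σp - U * σp * Uᴴ))).re = ω * max 0 (1 - 2 * p)) ∧
    (p ≤ 1 / 2 →
        X ∈ Matrix.unitaryGroup (Fin 2) ℂ ∧
        (Matrix.trace (H * (σp - X * σp * Xᴴ))).re = ω * max 0 (1 - 2 * p)) ∧
    (1 / 2 ≤ p →
        (Matrix.trace (H * (σp - (1 : Matrix (Fin 2) (Fin 2) ℂ) * σp *
          (1 : Matrix (Fin 2) (Fin 2) ℂ)ᴴ))).re = ω * max 0 (1 - 2 * p)) := by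
  intro H σp X
  have hswap (h : p ≤ 1 / 2) : (trace (H * (σp - X * σp * Xᴴ))).re = ω * max 0 (1 - 2 * p) := by
    rw [qubit_work_eq ω p swap_mem_unitaryGroup, max_eq_right (by linarith)]
    simp
  have hid (h : 1 / 2 ≤ p) : (trace (H * (σp - 1 * σp * 1ᴴ))).re = ω * max 0 (1 - 2 * p) := by
    rw [qubit_work_eq ω p (one_mem _), max_eq_left (by linarith)]
    simp
  refine ⟨fun U hU => ?_, ?_, fun h => ⟨swap_mem_unitaryGroup, hswap h⟩, hid⟩
  · rw [qubit_work_eq ω p hU, mul_assoc]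
    exact mul_le_mul_of_nonneg_left (mul_le_max_zero_of_mem_Icc
      ⟨sq_nonneg _, pow_le_one₀ (norm_nonneg _) (entry_norm_bound_of_unitary hU 1 0)⟩) hω
  · rcases le_total p (1 / 2) with h | h
    exacts [⟨X, swap_mem_unitaryGroup, hswap h⟩, ⟨1, one_mem _, hid h⟩]

/-- Ergotropy of a diagonal qubit state: for `σ_p = diag(p, 1-p)` and
`H = diag(0, ω)`, the extractable work `Re Tr(H (σ_p - U σ_p Uᴴ))` over
unitaries `U` is at most `ω max(0, 1 - 2p)`; the bound is attained, by the
swap when `p ≤ 1/2` and by the identity when `p ≥ 1/2`. -/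
theorem qubit_ergotropy
    (ω p : ℝ) (hω : 0 ≤ ω) (hp : p ∈ Set.Icc (0:ℝ) 1) :
    let H : Matrix (Fin 2) (Fin 2) ℂ := !![0, 0; 0, (ω : ℂ)]
    let σp : Matrix (Fin 2) (Fin 2) ℂ := !![((p : ℝ) : ℂ), 0; 0, ((1 - p : ℝ) : ℂ)]
    let X : Matrix (Fin 2) (Fin 2) ℂ := !![0, 1; 1, 0]
    (∀ U : Matrix (Fin 2) (Fin 2) ℂ, U ∈ Matrix.unitaryGroup (Fin 2) ℂ →
        (Matrix.trace (H * (σp - U * σp * Uᴴ))).re ≤ ω * max 0 (1 - 2 * p)) ∧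
    (∃ U ∈ Matrix.unitaryGroup (Fin 2) ℂ,
        (Matrix.trace (H * (σp - U * σp * Uᴴ))).re = ω * max 0 (1 - 2 * p)) ∧
    (p ≤ 1 / 2 →
        X ∈ Matrix.unitaryGroup (Fin 2) ℂ ∧
        (Matrix.trace (H * (σp - X * σp * Xᴴ))).re = ω * max 0 (1 - 2 * p)) ∧
    (1 / 2 ≤ p →
        (Matrix.trace (H * (σp - (1 : Matrix (Fin 2) (Fin 2) ℂ) * σp *
          (1 : Matrix (Fin 2) (Fin 2) ℂ)ᴴ))).re = ω * max 0 (1 - 2 * p)) :=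
  qubit_ergotropy_general ω p hω
end
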